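/- arXiv:1412.0561 — 3 statements merged into one kernel-verified Lean document; each statement's English description precedes it below -/
import Mathlib

section
/- For every x ∈ 𝒳 and every α ∈ [0,1), if U is uniformly distributed on (0,1), then Pr_U(p(x,U) ≤ α) = φ(x;α); that is, the Lebesgue measure of {u ∈ (0,1) : p(x,u) ≤ α} equals φ(x;α). -/
open MeasureTheory Set Filter Topology

/-- The p-value of the randomized test `u ≤ f α`; the `insert 1` encodes `inf ∅ = 1`. -/
noncomputable def pValue (f : ℝ → ℝ) (u : ℝ) : ℝ :=
  sInf (insert 1 {β ∈ Icc (0:ℝ) 1 | u ≤ f β})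

lemma pValue_le {f : ℝ → ℝ} {u α : ℝ} (hα : α ∈ Icc (0:ℝ) 1) (hu : u ≤ f α) :
    pValue f u ≤ α :=
  csInf_le ⟨0, by rintro t (rfl | ht) <;> [norm_num; exact ht.1.1]⟩
    (mem_insert_of_mem _ ⟨hα, hu⟩)

lemma le_apply_of_pValue_lt {f : ℝ → ℝ} (hf : MonotoneOn f (Icc 0 1)) {u β : ℝ}
    (hβ : β ∈ Icc (0:ℝ) 1) (hlt : pValue f u < β) (hβ1 : β < 1) : u ≤ f β := by
  obtain ⟨t, ht, htβ⟩ := exists_lt_of_csInf_lt (insert_nonempty _ _) hlt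
  rcases ht with rfl | ht
  · exact absurd htβ (not_lt.2 hβ1.le)
  · exact ht.2.trans (hf ht.1 hβ htβ.le)

/-- Right continuity turns `u ≤ f β` for all `β ∈ (α, 1)` into `u ≤ f α`. -/
lemma pValue_le_iff {f : ℝ → ℝ} (hf : MonotoneOn f (Icc 0 1)) {α : ℝ} (hα : α ∈ Ico (0:ℝ) 1)
    (hrc : ContinuousWithinAt f (Ici α) α) (u : ℝ) : pValue f u ≤ α ↔ u ≤ f α := by
  refine ⟨fun h => ?_, pValue_le (Ico_subset_Icc_self hα)⟩
  have hev : ∀ᶠ β in 𝓝[>] α, u ≤ f β := by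
    filter_upwards [Ioo_mem_nhdsGT_of_mem ⟨le_rfl, hα.2⟩] with β hβ
    exact le_apply_of_pValue_lt hf ⟨hα.1.trans hβ.1.le, hβ.2.le⟩ (h.trans_lt hβ.1) hβ.2
  exact ge_of_tendsto (hrc.mono_left (nhdsWithin_mono _ Ioi_subset_Ici_self)) hev

lemma volume_setOf_mem_Ioo_le {c : ℝ} (hc : c ≤ 1) :
    volume {u ∈ Ioo (0:ℝ) 1 | u ≤ c} = ENNReal.ofReal c := by
  refine le_antisymm ?_ ?_
  · calc volume {u ∈ Ioo (0:ℝ) 1 | u ≤ c} ≤ volume (Icc 0 c) :=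
          measure_mono fun u hu => ⟨hu.1.1.le, hu.2⟩
      _ = ENNReal.ofReal c := by rw [Real.volume_Icc, sub_zero]
  · calc ENNReal.ofReal c = volume (Ioo 0 c) := by rw [Real.volume_Ioo, sub_zero]
      _ ≤ volume {u ∈ Ioo (0:ℝ) 1 | u ≤ c} :=
          measure_mono fun u hu => ⟨⟨hu.1, hu.2.trans_le hc⟩, hu.2.le⟩

theorem stmt0_general {𝒳 : Type*}
    (φ : 𝒳 → ℝ → ℝ)
    (hφ01 : ∀ x, ∀ α ∈ Icc (0:ℝ) 1, φ x α ∈ Icc (0:ℝ) 1)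
    (hmono : ∀ x, MonotoneOn (φ x) (Icc (0:ℝ) 1))
    (hrc : ∀ x, ∀ α ∈ Ico (0:ℝ) 1, ContinuousWithinAt (φ x) (Ici α) α)
    (p : 𝒳 → ℝ → ℝ)
    (hp : ∀ x u, p x u = sInf (insert 1 {α ∈ Icc (0:ℝ) 1 | u ≤ φ x α}))
    (x : 𝒳) (α : ℝ) (hα : α ∈ Ico (0:ℝ) 1) :
    volume {u ∈ Ioo (0:ℝ) 1 | p x u ≤ α} = ENNReal.ofReal (φ x α) := by
  have hpx : p x = pValue (φ x) := funext (hp x)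
  simp_rw [hpx, pValue_le_iff (hmono x) hα (hrc x α hα)]
  rw [ volume_setOf_mem_Ioo_le (hφ01 x α (Ico_subset_Icc_self hα)).2]

/-- Theorem 1 of the paper: for a test function `φ(x;·)` that is nondecreasing and
right-continuous on `[0,1]`, with p-value `p(x,u) = inf{α ∈ [0,1] : u ≤ φ(x;α)}`
(infimum of the empty set being 1), the Lebesgue measure of
`{u ∈ (0,1) : p(x,u) ≤ α}` equals `φ(x;α)` for every `α ∈ [0,1)`. -/
theorem stmt0 {𝒳 : Type*} [Countable 𝒳]
    (φ : 𝒳 → ℝ → ℝ)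
    (hφ01 : ∀ x, ∀ α ∈ Icc (0:ℝ) 1, φ x α ∈ Icc (0:ℝ) 1)
    (hmono : ∀ x, MonotoneOn (φ x) (Icc (0:ℝ) 1))
    (hrc : ∀ x, ∀ α ∈ Ico (0:ℝ) 1, ContinuousWithinAt (φ x) (Ici α) α)
    (p : 𝒳 → ℝ → ℝ)
    (hp : ∀ x u, p x u = sInf (insert 1 {α ∈ Icc (0:ℝ) 1 | u ≤ φ x α}))
    (x : 𝒳) (α : ℝ) (hα : α ∈ Ico (0:ℝ) 1) :
    volume {u ∈ Ioo (0:ℝ) 1 | p x u ≤ α} = ENNReal.ofReal (φ x α) :=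
  stmt0_general φ hφ01 hmono hrc p hp x α hα
end

section
/- Let X be a random variable with values in ℤ with law Q, and let U be an independent uniform(0,1) random variable. Define the randomized p-value p*(X,U) = Q({y : y > X}) + U·Q({X}). Then p*(X,U) is uniformly distributed: for every t ∈ [0,1], Pr(p*(X,U) ≤ t) = t. -/
/-!
Given `X = x`, the event `p* ≤ t` is `{u ∈ (0,1) : Q(x,∞) + u·Q{x} ≤ t}`, whose probability
times `Q{x}` is `min t Q[x,∞) - min t Q(x,∞)`. Since `Q(x,∞) = Q[x+1,∞)`, these terms telescope
over `x ∈ ℤ` to `min t 1 - min t 0 = t`.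
-/

open MeasureTheory Set Filter Topology

lemma volume_Iic_inter_Ioo_zero_one (c : ℝ) :
    volume (Iic c ∩ Ioo (0 : ℝ) 1) = ENNReal.ofReal (min c 1) := by
  apply le_antisymm
  · calc volume (Iic c ∩ Ioo (0 : ℝ) 1) ≤ volume (Ioc 0 (min c 1)) :=
          measure_mono fun u ⟨huc, hu0, hu1⟩ ↦ ⟨hu0, le_min huc hu1.le⟩
      _ = ENNReal.ofReal (min c 1) := by rw [Real.volume_Ioc, sub_zero]
  · calc ENNReal.ofReal (min c 1) = volume (Ioo 0 (min c 1)) := by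
          rw [Real.volume_Ioo, sub_zero]
      _ ≤ volume (Iic c ∩ Ioo (0 : ℝ) 1) :=
          measure_mono fun u ⟨hu0, hu⟩ ↦
            ⟨(hu.trans_le (min_le_left _ _)).le, hu0, hu.trans_le (min_le_right _ _)⟩

lemma volume_restrict_Ioo_setOf_add_mul_le_mul_ofReal {q : ℝ} (hq : 0 ≤ q) (a t : ℝ) :
    volume.restrict (Ioo (0 : ℝ) 1) {u | a + u * q ≤ t} * ENNReal.ofReal q
      = ENNReal.ofReal (min t (a + q) - min t a) := by
  rcases hq.eq_or_lt with rfl | hq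
  · simp
  have hset : {u : ℝ | a + u * q ≤ t} = Iic ((t - a) / q) := by
    ext u
    rw [mem_ofPred_eq, mem_Iic, le_div_iff₀ hq]
    constructor <;> intro h <;> linarith
  rw [hset, Measure.restrict_apply measurableSet_Iic, volume_Iic_inter_Ioo_zero_one,
    ← ENNReal.ofReal_mul' hq.le, min_mul_of_nonneg _ _ hq.le, div_mul_cancel₀ _ hq.ne', one_mul]
  rcases le_total t a with hta | hat
  · rw [min_eq_left hta, min_eq_left (hta.trans (le_add_of_nonneg_right hq.le)), sub_self,
      ENNReal.ofReal_zero, ENNReal.ofReal_eq_zero]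
    exact (min_le_left _ _).trans (sub_nonpos.2 hta)
  · rw [min_eq_right hat, ← min_sub_sub_right, add_sub_cancel_left]

lemma Antitone.hasSum_sub_add_one_nat {f : ℕ → ℝ} (hf : Antitone f) {b : ℝ}
    (hb : Tendsto f atTop (𝓝 b)) : HasSum (fun n ↦ f n - f (n + 1)) (f 0 - b) := by
  rw [hasSum_iff_tendsto_nat_of_nonneg fun n ↦ sub_nonneg.2 (hf n.le_succ)]
  simp only [Finset.sum_range_sub']
  exact tendsto_const_nhds.sub hb

lemma Antitone.hasSum_sub_add_one_int {f : ℤ → ℝ} (hf : Antitone f) {a b : ℝ}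
    (ha : Tendsto f atBot (𝓝 a)) (hb : Tendsto f atTop (𝓝 b)) :
    HasSum (fun n ↦ f n - f (n + 1)) (a - b) := by
  have hpos : HasSum (fun n : ℕ ↦ f n - f (n + 1)) (f 0 - b) := by
    simpa only [Function.comp_apply, Nat.cast_add, Nat.cast_one, Nat.cast_zero] using
      (hf.comp_monotone Nat.mono_cast).hasSum_sub_add_one_nat
        (hb.comp tendsto_natCast_atTop_atTop)
  have hneg : HasSum (fun n : ℕ ↦ f (-(n + 1)) - f (-(n + 1) + 1)) (a - f 0) := by
    have hg : Antitone fun n : ℕ ↦ -f (-n) := fun _ _ h ↦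
      neg_le_neg (hf (neg_le_neg (Nat.cast_le.2 h)))
    convert hg.hasSum_sub_add_one_nat
      (ha.comp (tendsto_neg_atTop_atBot.comp tendsto_natCast_atTop_atTop)).neg using 1
    · ext n
      simp only [Nat.cast_add, Nat.cast_one]
      ring_nf
    · simp only [Nat.cast_zero, neg_zero]
      ring
  have := HasSum.of_nat_of_neg_add_one (f := fun n ↦ f n - f (n + 1)) hpos hneg
  rwa [sub_add_sub_cancel'] at this

lemma tendsto_measure_Ici_atTop {α : Type*} [LinearOrder α] [Nonempty α] [NoMaxOrder α]
    [(atTop : Filter α).IsCountablyGenerated] [MeasurableSpace α] [TopologicalSpace α]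
    [OpensMeasurableSpace α] [ClosedIciTopology α] (μ : Measure α) [IsFiniteMeasure μ] :
    Tendsto (fun x ↦ μ (Ici x)) atTop (𝓝 0) := by
  have hempty : ⋂ x : α, Ici x = ∅ :=
    iInter_eq_empty_iff.2 fun x ↦ (exists_gt x).imp fun _ h ↦ not_le.2 h
  simpa [hempty, Function.comp_def] using tendsto_measure_iInter_atTop (μ := μ)
    (fun x ↦ measurableSet_Ici.nullMeasurableSet) (fun _ _ h ↦ Ici_subset_Ici.2 h)
    ⟨Classical.arbitrary α, measure_ne_top μ _⟩

lemma measureReal_Ioi_add_measureReal_singleton {α : Type*} [PartialOrder α] [MeasurableSpace α]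
    [MeasurableSingletonClass α] (μ : Measure α) [IsFiniteMeasure μ] (a : α) :
    μ.real (Ioi a) + μ.real {a} = μ.real (Ici a) := by
  rw [← Ioi_union_left, measureReal_union (by simp) (measurableSet_singleton a)]

lemma ProbabilityTheory.IndepFun.measure_preimage_eq_tsum {Ω α β : Type*} [MeasurableSpace Ω]
    {P : Measure Ω} [IsFiniteMeasure P] [MeasurableSpace α] [Countable α]
    [MeasurableSingletonClass α] [MeasurableSpace β] {X : Ω → α} {Y : Ω → β}
    (hXY : IndepFun X Y P) (hX : Measurable X) (hY : Measurable Y) {s : Set (α × β)}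
    (hs : MeasurableSet s) :
    P ((fun ω ↦ (X ω, Y ω)) ⁻¹' s) = ∑' x, P.map Y (Prod.mk x ⁻¹' s) * P.map X {x} := by
  rw [← Measure.map_apply (hX.prodMk hY) hs,
    (indepFun_iff_map_prod_eq_prod_map_map hX.aemeasurable hY.aemeasurable).1 hXY,
    Measure.prod_apply hs, lintegral_countable']

/-- If `X` has law `Q` on ℤ and `U` is an independent uniform(0,1) random variable,
then the randomized p-value `p*(X,U) = Q({y : y > X}) + U·Q({X})` is uniformly
distributed: `Pr(p*(X,U) ≤ t) = t` for every `t ∈ [0,1]`. -/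
theorem stmt9 {Ω : Type*} [MeasurableSpace Ω] (P : Measure Ω) [IsProbabilityMeasure P]
    (X : Ω → ℤ) (U : Ω → ℝ) (hX : Measurable X) (hU : Measurable U)
    (Q : Measure ℤ) [IsProbabilityMeasure Q] (hXlaw : P.map X = Q)
    (hUlaw : P.map U = volume.restrict (Ioo (0:ℝ) 1))
    (hindep : ProbabilityTheory.IndepFun X U P)
    (t : ℝ) (ht : t ∈ Icc (0:ℝ) 1) :
    P {ω | (Q {y | X ω < y}).toReal + U ω * (Q {X ω}).toReal ≤ t} =
      ENNReal.ofReal t := by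
  set f : ℤ → ℝ := fun x ↦ min t (Q.real (Ici x))
  have hf : Antitone f := fun x y h ↦ min_le_min_left t (measureReal_mono (Ici_subset_Ici.2 h))
  have hterm (x : ℤ) : volume.restrict (Ioo (0 : ℝ) 1)
      {u | Q.real (Ioi x) + u * Q.real {x} ≤ t} * Q {x} = ENNReal.ofReal (f x - f (x + 1)) := by
    rw [← ofReal_measureReal (s := {x}),
      volume_restrict_Ioo_setOf_add_mul_le_mul_ofReal measureReal_nonneg,
      measureReal_Ioi_add_measureReal_singleton, ← Ici_add_one_eq_Ioi]
  have hsum : HasSum (fun x ↦ f x - f (x + 1)) t := by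
    have hbot : Tendsto (fun x ↦ Q.real (Ici x)) atBot (𝓝 1) := by
      have := tendsto_measure_Ici_atBot Q
      rw [measure_univ] at this
      exact (ENNReal.tendsto_toReal ENNReal.one_ne_top).comp this
    have htop : Tendsto (fun x ↦ Q.real (Ici x)) atTop (𝓝 0) :=
      (ENNReal.tendsto_toReal ENNReal.zero_ne_top).comp (tendsto_measure_Ici_atTop Q)
    simpa [min_eq_left ht.2, min_eq_right ht.1] using
      hf.hasSum_sub_add_one_int (tendsto_const_nhds.min hbot) (tendsto_const_nhds.min htop)
  have hs : MeasurableSet {p : ℤ × ℝ | Q.real (Ioi p.1) + p.2 * Q.real {p.1} ≤ t} :=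
    measurableSet_le (measurable_from_prod_countable_right fun _ ↦ by dsimp only; fun_prop)
      measurable_const
  change P ((fun ω ↦ (X ω, U ω)) ⁻¹' {p : ℤ × ℝ | Q.real (Ioi p.1) + p.2 * Q.real {p.1} ≤ t}) = _
  rw [hindep.measure_preimage_eq_tsum hX hU hs, hXlaw, hUlaw]
  refine (tsum_congr hterm).trans ?_
  rw [← ENNReal.ofReal_tsum_of_nonneg (fun x ↦ sub_nonneg.2 (hf (lt_add_one x).le))
    hsum.summable, hsum.tsum_eq]
end

section
/- Fix c > 0 and α with cα ∈ (0,1), and consider the single-step multiple testing procedure δ*_m(x_m,u_m;α) = 1 if p*_m(x_m,u_m) ≤ cα and 0 otherwise. Suppose k_m ∈ ℤ and γ_m ∈ (0,1) satisfy P⁰_m(X_m > k_m) + γ_m·P⁰_m(X_m = k_m) = cα with P⁰_m(X_m = k_m) > 0, and let φ*_m(x;α) = 1 if x > k_m, γ_m if x = k_m, 0 if x < k_m. Then for any distribution P of X_m with P(X_m = k_m) > 0: the map u_m ↦ E_{X_m}[δ*_m(X_m,u_m;α)] is nonincreasing on (0,1], and E_{X_m}[δ*_m(X_m,u_m;α)]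 > E_{X_m}[φ*_m(X_m;α)] if u_m ≤ γ_m while E_{X_m}[δ*_m(X_m,u_m;α)] < E_{X_m}[φ*_m(X_m;α)] if u_m > γ_m. -/
open MeasureTheory Set

/-!
The size condition says `cα = p*(k, γ)`. Since `p*(x, u)` increases in `u` and
`p*(x', 1) ≤ p*(x, 0)` for `x < x'`, for `u ∈ (0, 1]` every `x > k` is rejected and every
`x < k` accepted, while `x = k` is rejected exactly when `u ≤ γ` (as `P⁰(X = k) > 0`).
Hence `δ*(·, u)` is the threshold test at `k` with randomization `1{u ≤ γ}` in place of `γ`,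
and both expectations are `P(X > k) + (·) P(X = k)`.
-/

section RandPValue

variable {α : Type*} [LinearOrder α] [MeasurableSpace α] (μ : Measure α)

def thresholdTest (k : α) (a : ℝ) (x : α) : ℝ := if k < x then 1 else if x = k then a else 0

def randPValue (x : α) (u : ℝ) : ℝ := μ.real (Ioi x) + u * μ.real {x}

theorem randPValue_monotone (x : α) : Monotone (randPValue μ x) :=
  fun _ _ h => add_le_add_right (mul_le_mul_of_nonneg_right h measureReal_nonneg) _

theorem randPValue_strictMono [IsFiniteMeasure μ] {k : α} (hk : μ {k} ≠ 0) :
    StrictMono (randPValue μ k) :=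
  fun _ _ h => add_lt_add_right
    (mul_lt_mul_of_pos_right h (ENNReal.toReal_pos hk (measure_ne_top μ _))) _

theorem randPValue_one_le_randPValue_zero [MeasurableSingletonClass α] [IsFiniteMeasure μ]
    {x k : α} (h : x < k) : randPValue μ k 1 ≤ randPValue μ x 0 := by
  have hdisj : Disjoint (Ioi k) {k} := disjoint_singleton_right.mpr (lt_irrefl k)
  have hsub : Ioi k ∪ {k} ⊆ Ioi x :=
    union_subset (Ioi_subset_Ioi h.le) (singleton_subset_iff.mpr h)
  have := measureReal_mono (μ := μ) hsub
  rw [measureReal_union hdisj (measurableSet_singleton k)] at this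
  simpa [randPValue] using this

theorem ite_randPValue_le_eq_thresholdTest [MeasurableSingletonClass α] [IsFiniteMeasure μ]
    {k : α} (hk : μ {k} ≠ 0) {γ u : ℝ} (hγ0 : 0 ≤ γ) (hγ1 : γ < 1)
    (hu0 : 0 ≤ u) (hu1 : u ≤ 1) (x : α) :
    (if randPValue μ x u ≤ randPValue μ k γ then (1 : ℝ) else 0) =
      thresholdTest k (if u ≤ γ then 1 else 0) x := by
  rcases lt_trichotomy x k with hxk | rfl | hkx
  · have : randPValue μ k γ < randPValue μ x u :=
      calc randPValue μ k γ < randPValue μ k 1 := randPValue_strictMono μ hk hγ1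
        _ ≤ randPValue μ x 0 := randPValue_one_le_randPValue_zero μ hxk
        _ ≤ randPValue μ x u := randPValue_monotone μ x hu0
    simp [thresholdTest, this.not_ge, hxk.not_gt, hxk.ne]
  · simp [thresholdTest, (randPValue_strictMono μ hk).le_iff_le]
  · have : randPValue μ x u ≤ randPValue μ k γ :=
      calc randPValue μ x u ≤ randPValue μ x 1 := randPValue_monotone μ x hu1
        _ ≤ randPValue μ k 0 := randPValue_one_le_randPValue_zero μ hkx
        _ ≤ randPValue μ k γ := randPValue_monotone μ k hγ0
    simp [thresholdTest, this, hkx]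

end RandPValue

theorem integral_thresholdTest {α : Type*} [LinearOrder α] [Countable α] [MeasurableSpace α]
    [MeasurableSingletonClass α] (P : Measure α) [IsFiniteMeasure P] (k : α) (a : ℝ) :
    ∫ x, thresholdTest k a x ∂P = P.real (Ioi k) + a * P.real {k} := by
  have hsplit : thresholdTest k a =
      fun x => (Ioi k).indicator (fun _ => 1) x + ({k} : Set α).indicator (fun _ => a) x := by
    funext x
    rcases lt_trichotomy x k with hxk | rfl | hkx
    · simp [thresholdTest, hxk.not_gt, hxk.ne]
    · simp [thresholdTest]
    · simp [thresholdTest, hkx, hkx.ne']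
  have hIoi : MeasurableSet (Ioi k) := (to_countable _).measurableSet
  rw [hsplit, integral_add ((integrable_const 1).indicator hIoi)
      ((integrable_const a).indicator (measurableSet_singleton k)),
    integral_indicator_const _ hIoi, integral_indicator_const _ (measurableSet_singleton k)]
  simp [mul_comm]

theorem stmt14_general (P0 P : Measure ℤ) [IsProbabilityMeasure P0] [IsProbabilityMeasure P]
    (c α : ℝ)
    (k : ℤ) (γ : ℝ) (hγ : γ ∈ Ioo (0:ℝ) 1)
    (hsize : (P0 {y | k < y}).toReal + γ * (P0 {k}).toReal = c * α)
    (hk0 : P0 {k} ≠ 0) (hkP : P {k} ≠ 0)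
    (φ : ℤ → ℝ) (hφ : ∀ x, φ x = if k < x then 1 else if x = k then γ else 0)
    (δ : ℤ → ℝ → ℝ)
    (hδ : ∀ x u, δ x u =
      if (P0 {y | x < y}).toReal + u * (P0 {x}).toReal ≤ c * α then 1 else 0) :
    AntitoneOn (fun u => ∫ x, δ x u ∂P) (Ioc (0:ℝ) 1) ∧
    ∀ u ∈ Ioc (0:ℝ) 1,
      (u ≤ γ → ∫ x, δ x u ∂P > ∫ x, φ x ∂P) ∧
      (γ < u → ∫ x, δ x u ∂P < ∫ x, φ x ∂P) := by
  have hδint : ∀ u ∈ Ioc (0:ℝ) 1,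
      ∫ x, δ x u ∂P = P.real (Ioi k) + (if u ≤ γ then 1 else 0) * P.real {k} := by
    intro u hu
    have hδu : (fun x => δ x u) = thresholdTest k (if u ≤ γ then 1 else 0) :=
      funext fun x => by
        rw [hδ, ← hsize]
        exact ite_randPValue_le_eq_thresholdTest P0 hk0 hγ.1.le hγ.2 hu.1.le hu.2 x
    rw [hδu, integral_thresholdTest]
  have hφint : ∫ x, φ x ∂P = P.real (Ioi k) + γ * P.real {k} := by
    rw [show φ = thresholdTest k γ from funext hφ, integral_thresholdTest]
  have hPk : 0 < P.real {k} := ENNReal.toReal_pos hkP (measure_ne_top P _)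
  refine ⟨fun u hu v hv huv => ?_, fun u hu => ⟨fun huγ => ?_, fun hγu => ?_⟩⟩
  · simp only [hδint u hu, hδint v hv]
    gcongr
    split_ifs <;> grind
  · rw [hδint u hu, hφint, if_pos huγ]
    gcongr
    exact hγ.2
  · rw [hδint u hu, hφint, if_neg hγu.not_ge]
    gcongr
    exact hγ.1

/-- Claim C6: fix `c > 0` and `α` with `cα ∈ (0,1)`, and consider the single-step
procedure `δ*_m(x,u;α) = 1{p*_m(x,u) ≤ cα}` with `p*_m(x,u) = P⁰_m(X_m > x) + u·P⁰_m(X_m = x)`.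
If `k_m, γ_m` satisfy `P⁰_m(X_m > k_m) + γ_m·P⁰_m(X_m = k_m) = cα` with
`P⁰_m(X_m = k_m) > 0`, and `φ*_m` is the corresponding test function, then for any
distribution `P` with `P(X_m = k_m) > 0`: `u ↦ E_{X_m}[δ*_m(X_m,u;α)]` is nonincreasing
on `(0,1]`, and `E_{X_m}[δ*_m(X_m,u;α)] > E_{X_m}[φ*_m(X_m;α)]` if `u ≤ γ_m` while
`E_{X_m}[δ*_m(X_m,u;α)] < E_{X_m}[φ*_m(X_m;α)]` if `u > γ_m`. -/
theorem stmt14 (P0 P : Measure ℤ) [IsProbabilityMeasure P0] [IsProbabilityMeasure P]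
    (c α : ℝ) (hc : 0 < c) (hcα : c * α ∈ Ioo (0:ℝ) 1)
    (k : ℤ) (γ : ℝ) (hγ : γ ∈ Ioo (0:ℝ) 1)
    (hsize : (P0 {y | k < y}).toReal + γ * (P0 {k}).toReal = c * α)
    (hk0 : P0 {k} ≠ 0) (hkP : P {k} ≠ 0)
    (φ : ℤ → ℝ) (hφ : ∀ x, φ x = if k < x then 1 else if x = k then γ else 0)
    (δ : ℤ → ℝ → ℝ)
    (hδ : ∀ x u, δ x u =
      if (P0 {y | x < y}).toReal + u * (P0 {x}).toReal ≤ c * α then 1 else 0) :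
    AntitoneOn (fun u => ∫ x, δ x u ∂P) (Ioc (0:ℝ) 1) ∧
    ∀ u ∈ Ioc (0:ℝ) 1,
      (u ≤ γ → ∫ x, δ x u ∂P > ∫ x, φ x ∂P) ∧
      (γ < u → ∫ x, δ x u ∂P < ∫ x, φ x ∂P) :=
  stmt14_general P0 P c α k γ hγ hsize hk0 hkP φ hφ δ hδ
end
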